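/- arXiv:1312.1433 — 4 statements merged into one kernel-verified Lean document; each statement's English description precedes it below -/
import Mathlib

section
/- Let A_n be the n×n skew-symmetric matrix with entries +1 above the diagonal and −1 below the diagonal. Then the eigenvalues of A_n are λ_k = −i·cot(π(2k−1)/(2n)) for k = 1,…,n, and the eigenvector associated with λ_k is u_k = n^{-1/2}(1, ρ_k, …, ρ_k^{n−1})ᵀ where ρ_k = exp(−iπ(2k−1)/n). -/
open Matrix Complex

/-!
Put `θ_k = π(2k-1)/(2n)` and `ρ_k = exp(-2iθ_k)`, so that `ρ_k ^ n = -1`. For any `ρ` with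
`ρ ^ n = -1`, multiplying the `i`-th row sum `∑ⱼ sgn(j - i) ρ^j` by `1 - ρ` telescopes both
geometric sums to `(1 + ρ) ρ^i`; hence `(ρ^j)ⱼ` is an eigenvector for any `λ` with
`λ (1 - ρ) = 1 + ρ`, a relation equivalent to `ρ = (λ - 1)/(λ + 1)`. For `ρ = ρ_k` it is solved
by `λ = -i cot θ_k`, and the eigenvalues are distinct because `cot` is injective on `(0, π)`.
-/

def skewA (n : ℕ) : Matrix (Fin n) (Fin n) ℂ :=
  fun i j => if i < j then 1 else if j < i then -1 else 0

/-- λ_k = −i·cot(π(2k−1)/(2n)), with `k : Fin n` corresponding to k+1 ∈ {1,…,n}. -/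
noncomputable def skewAEigenvalue (n : ℕ) (k : Fin n) : ℂ :=
  -Complex.I * (Real.cos (Real.pi * (2 * ((k : ℕ) + 1) - 1) / (2 * n)) /
      Real.sin (Real.pi * (2 * ((k : ℕ) + 1) - 1) / (2 * n)))

noncomputable def skewAEigenvector (n : ℕ) (k : Fin n) : Fin n → ℂ :=
  fun j => (Real.sqrt n)⁻¹ *
    (Complex.exp (-Complex.I * Real.pi * (2 * ((k : ℕ) + 1 : ℝ) - 1) / n)) ^ (j : ℕ)

theorem one_sub_mul_sum_sign_mul_pow {R : Type*} [CommRing R] {n : ℕ} {ρ : R}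
    (hρ : ρ ^ n = -1) (i : Fin n) :
    (1 - ρ) * ∑ j : Fin n, (if i < j then 1 else if j < i then -1 else 0) * ρ ^ (j : ℕ)
      = (1 + ρ) * ρ ^ (i : ℕ) := by
  have hi : (i : ℕ) + 1 ≤ n := i.isLt
  simp only [Fin.lt_def]
  rw [Fin.sum_univ_eq_sum_range
      (fun j => (if (i : ℕ) < j then 1 else if j < i then -1 else 0) * ρ ^ j),
    ← Finset.sum_range_add_sum_Ico _ hi, Finset.sum_range_succ]
  have below : ∑ j ∈ Finset.range i, (if (i : ℕ) < j then 1 else if j < i then -1 else 0) * ρ ^ j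
      = -∑ j ∈ Finset.range i, ρ ^ j := by
    rw [← Finset.sum_neg_distrib]
    refine Finset.sum_congr rfl fun j hj => ?_
    have hj : j < i := Finset.mem_range.mp hj
    simp [hj, hj.not_gt]
  have above : ∑ j ∈ Finset.Ico (i + 1 : ℕ) n,
      (if (i : ℕ) < j then 1 else if j < i then -1 else 0) * ρ ^ j
      = ∑ j ∈ Finset.Ico (i + 1 : ℕ) n, ρ ^ j := by
    refine Finset.sum_congr rfl fun j hj => ?_
    simp [Nat.lt_of_succ_le (Finset.mem_Ico.mp hj).1]
  rw [below, above]
  simp only [lt_irrefl, if_false, zero_mul, add_zero]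
  linear_combination (-1 : R) * geom_sum_Ico_mul ρ hi + geom_sum_mul ρ i - hρ

theorem skewA_mulVec_geom {n : ℕ} {ρ μ : ℂ} (hρ : ρ ^ n = -1) (hμ : μ * (1 - ρ) = 1 + ρ)
    (c : ℂ) :
    skewA n *ᵥ (fun j : Fin n => c * ρ ^ (j : ℕ)) = μ • fun j : Fin n => c * ρ ^ (j : ℕ) := by
  have hρ1 : 1 - ρ ≠ 0 := by
    intro h
    rw [← sub_eq_zero.mp h, one_pow] at hρ
    norm_num at hρ
  funext i
  have hsum : ∑ j : Fin n, (if i < j then 1 else if j < i then -1 else 0) * ρ ^ (j : ℕ)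
      = μ * ρ ^ (i : ℕ) :=
    mul_left_cancel₀ hρ1 (by rw [one_sub_mul_sum_sign_mul_pow hρ i, ← hμ]; ring)
  simp only [mulVec, dotProduct, skewA, Pi.smul_apply, smul_eq_mul]
  rw [mul_left_comm, ← hsum, Finset.mul_sum]
  exact Finset.sum_congr rfl fun j _ => by ring

theorem eq_div_of_mul_one_sub_eq {K : Type*} [Field K] [NeZero (2 : K)] {μ ρ : K}
    (h : μ * (1 - ρ) = 1 + ρ) : ρ = (μ - 1) / (μ + 1) := by
  have hμ : μ + 1 ≠ 0 := by
    intro h0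
    apply two_ne_zero (α := K)
    linear_combination (1 - ρ) * h0 - h
  rw [eq_div_iff hμ]
  linear_combination -h

theorem Complex.neg_I_mul_cot_mul_one_sub_exp {z : ℂ} (hz : sin z ≠ 0) :
    -I * cot z * (1 - exp (-(2 * z) * I)) = 1 + exp (-(2 * z) * I) := by
  rw [cot_eq_cos_div_sin, exp_mul_I, cos_neg, sin_neg, cos_two_mul, sin_two_mul]
  field_simp
  linear_combination (-2 * cos z ^ 2 * sin z) * I_sq + (2 * I * cos z) * cos_sq_add_sin_sq z

theorem Real.injOn_cot : Set.InjOn Real.cot (Set.Ioo 0 Real.pi) := by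
  intro x ⟨hx0, hxπ⟩ y ⟨hy0, hyπ⟩ h
  rw [Real.cot_eq_cos_div_sin, Real.cot_eq_cos_div_sin,
    div_eq_div_iff (Real.sin_pos_of_pos_of_lt_pi hx0 hxπ).ne'
      (Real.sin_pos_of_pos_of_lt_pi hy0 hyπ).ne'] at h
  have hsin : Real.sin (y - x) = 0 := by rw [Real.sin_sub]; linarith
  linarith [(Real.sin_eq_zero_iff_of_lt_of_lt (by linarith) (by linarith)).mp hsin]

noncomputable def skewAAngle (n : ℕ) (k : Fin n) : ℝ :=
  Real.pi * (2 * ((k : ℕ) + 1) - 1) / (2 * n)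

theorem skewAAngle_mem_Ioo {n : ℕ} (k : Fin n) : skewAAngle n k ∈ Set.Ioo 0 Real.pi := by
  have hk0 : (0 : ℝ) ≤ k := Nat.cast_nonneg _
  have hkn : ((k : ℕ) : ℝ) + 1 ≤ n := by exact_mod_cast k.isLt
  rw [skewAAngle, Set.mem_Ioo, lt_div_iff₀ (by linarith), div_lt_iff₀ (by linarith)]
  constructor <;> nlinarith [Real.pi_pos]

theorem skewAAngle_injective (n : ℕ) : Function.Injective (skewAAngle n) := by
  intro k l h
  have hn : (n : ℝ) ≠ 0 := by exact_mod_cast k.pos.ne'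
  simp only [skewAAngle] at h
  field_simp at h
  exact Fin.ext (by exact_mod_cast (by nlinarith [Real.pi_pos] : ((k : ℕ) : ℝ) = l))

theorem skewAEigenvalue_eq (n : ℕ) (k : Fin n) :
    skewAEigenvalue n k = -I * (Real.cot (skewAAngle n k) : ℂ) := by
  rw [Real.cot_eq_cos_div_sin, ofReal_div]
  rfl

theorem skewAEigenvalue_injective (n : ℕ) : Function.Injective (skewAEigenvalue n) := by
  intro k l h
  rw [skewAEigenvalue_eq, skewAEigenvalue_eq] at h
  exact skewAAngle_injective n <| Real.injOn_cot (skewAAngle_mem_Ioo k) (skewAAngle_mem_Ioo l) <|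
    ofReal_injective (mul_left_cancel₀ (neg_ne_zero.2 I_ne_zero) h)

theorem exp_skewAAngle_pow_eq_neg_one {n : ℕ} (k : Fin n) :
    exp (-(2 * (skewAAngle n k : ℂ)) * I) ^ n = -1 := by
  have hn : (n : ℂ) ≠ 0 := by exact_mod_cast k.pos.ne'
  rw [← exp_nat_mul, skewAAngle,
    show (n : ℂ) * (-(2 * ((Real.pi * (2 * ((k : ℕ) + 1) - 1) / (2 * n) : ℝ) : ℂ)) * I)
      = ((2 * k + 1 : ℕ) : ℂ) * -(Real.pi * I) by push_cast; field_simp; ring,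
    exp_nat_mul, exp_neg, exp_pi_mul_I, inv_neg_one]
  exact Odd.neg_one_pow ⟨k, rfl⟩

theorem exp_skewAEigenvector_exponent {n : ℕ} (k : Fin n) :
    exp (-I * Real.pi * (2 * ((k : ℕ) + 1 : ℝ) - 1) / n)
      = exp (-(2 * (skewAAngle n k : ℂ)) * I) := by
  have hn : (n : ℂ) ≠ 0 := by exact_mod_cast k.pos.ne'
  congr 1
  rw [skewAAngle]
  push_cast
  field_simp

theorem skewA_eigen_general (n : ℕ) :
    (∀ k : Fin n,
      (skewA n).mulVec (skewAEigenvector n k) = skewAEigenvalue n k • skewAEigenvector n k ∧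
      skewAEigenvector n k ≠ 0 ∧
      Complex.exp (-Complex.I * Real.pi * (2 * ((k : ℕ) + 1 : ℝ) - 1) / n)
        = (skewAEigenvalue n k - 1) / (skewAEigenvalue n k + 1)) ∧
    Function.Injective (skewAEigenvalue n) := by
  refine ⟨fun k => ?_, skewAEigenvalue_injective n⟩
  obtain ⟨hθ0, hθπ⟩ := skewAAngle_mem_Ioo k
  have hsin : sin (skewAAngle n k : ℂ) ≠ 0 := by
    rw [← ofReal_sin]
    exact ofReal_ne_zero.2 (Real.sin_pos_of_pos_of_lt_pi hθ0 hθπ).ne'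
  have hμ := neg_I_mul_cot_mul_one_sub_exp hsin
  rw [← ofReal_cot, ← skewAEigenvalue_eq] at hμ
  have hu : skewAEigenvector n k
      = fun j : Fin n =>
          (((Real.sqrt n)⁻¹ : ℝ) : ℂ) * exp (-(2 * (skewAAngle n k : ℂ)) * I) ^ (j : ℕ) := by
    funext j
    rw [skewAEigenvector, exp_skewAEigenvector_exponent]
  refine ⟨?_, ?_, ?_⟩
  · rw [hu]
    exact skewA_mulVec_geom (exp_skewAAngle_pow_eq_neg_one k) hμ _
  · have hn : (Real.sqrt n : ℂ) ≠ 0 := by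
      exact_mod_cast (Real.sqrt_pos.2 (Nat.cast_pos.2 k.pos)).ne'
    exact Function.ne_iff.2 ⟨⟨0, k.pos⟩, by simpa [skewAEigenvector] using hn⟩
  · rw [exp_skewAEigenvector_exponent]
    exact eq_div_of_mul_one_sub_eq hμ

theorem skewA_eigen (n : ℕ) (hn : 0 < n) :
    (∀ k : Fin n,
      (skewA n).mulVec (skewAEigenvector n k) = skewAEigenvalue n k • skewAEigenvector n k ∧
      skewAEigenvector n k ≠ 0 ∧
      Complex.exp (-Complex.I * Real.pi * (2 * ((k : ℕ) + 1 : ℝ) - 1) / n)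
        = (skewAEigenvalue n k - 1) / (skewAEigenvalue n k + 1)) ∧
    Function.Injective (skewAEigenvalue n) :=
  skewA_eigen_general n
end

section
/- Let A_n be the n×n skew-symmetric matrix with +1 above and −1 below the diagonal, and let u = n^{-1/2}(1, ρ, …, ρ^{n−1})ᵀ with ρ = exp(−iπ(2k−1)/n), v = ū. Then u* A_n v = v* A_n u = 0. -/
open Matrix Complex

lemma skewA_anti (n : ℕ) (i j : Fin n) : skewA n j i = - skewA n i j := by
  unfold skewA
  rcases lt_trichotomy i j with h | h | h
  · simp [h, not_lt.2 h.le, h.not_gt]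
  · simp [h]
  · simp [h, not_lt.2 h.le, h.not_gt]

lemma quad_zero (n : ℕ) (x : Fin n → ℂ) : x ⬝ᵥ (skewA n).mulVec x = 0 := by
  have hT : (skewA n)ᵀ = - skewA n := by
    ext i j
    simp [Matrix.transpose_apply, skewA_anti n j i]
  have h : x ⬝ᵥ (skewA n).mulVec x = - (x ⬝ᵥ (skewA n).mulVec x) := by
    calc x ⬝ᵥ (skewA n).mulVec x = (x ᵥ* skewA n) ⬝ᵥ x := by
          rw [Matrix.dotProduct_mulVec]
      _ = ((skewA n)ᵀ *ᵥ x) ⬝ᵥ x := by rw [Matrix.mulVec_transpose]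
      _ = x ⬝ᵥ ((skewA n)ᵀ *ᵥ x) := by rw [dotProduct_comm]
      _ = - (x ⬝ᵥ (skewA n).mulVec x) := by rw [hT, Matrix.neg_mulVec, dotProduct_neg]
  linear_combination h / 2

theorem skewA_bilinear_vanish (n : ℕ) (hn : 0 < n) (k : ℕ) :
    let rho : ℂ := Complex.exp (-Complex.I * Real.pi * (2 * (k : ℝ) - 1) / n)
    let u : Fin n → ℂ := fun j => (Real.sqrt n)⁻¹ * rho ^ (j : ℕ)
    let v : Fin n → ℂ := fun j => (starRingEnd ℂ) (u j)
    star u ⬝ᵥ (skewA n).mulVec v = 0 ∧ star v ⬝ᵥ (skewA n).mulVec u = 0 := by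
  intro rho u v
  have hu : star u = v := by funext j; simp [v, Pi.star_apply]
  have hv : star v = u := by funext j; simp [v, Pi.star_apply]
  rw [hu, hv]
  exact ⟨quad_zero n v, quad_zero n u⟩
end

section
/- Let Q be a 2n×2n Hermitian matrix with 2×2 blocks x_{jk}, and suppose a unit vector z is formed by taking z_k* = (1/√2, 0), z_j* = (λ̄_{jk}/(√2‖x_{jk}‖), −ω_{jk}/(√2‖x_{jk}‖)) for some fixed j ≠ k with x_{jk} = [[λ_{jk}, ω_{jk}],[-ω̄_{jk}, λ̄_{jk}]] ≠ 0, and z_l = 0 otherwise. Then z*Qz = ‖x_{jk}‖ + (1/2)(a_{jj} + a_{kk}), where x_{ll} = a_{ll}·I₂. In particular the largest eigenvalue of Q is at least ‖x_{jk}‖ + (1/2)(a_{jj} + a_{kk}). -/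
/-!
The vector `z` lives on the three coordinates `(k,0)`, `(j,0)`, `(j,1)`, so `z*Qz` only sees the
diagonal entries `a_k`, `a_j` and the block `x_{jk}` with its adjoint `x_{kj}`. The diagonal
terms give `(a_j + a_k)/2`; the four cross terms add up to `2(|λ|² + |ω|²)/(2‖x_{jk}‖) = ‖x_{jk}‖`.
Since `‖z‖ = 1` and `Q ≤ λ_max • 1` in the Loewner order, `z*Qz ≤ λ_max`.
-/

open Matrix Complex ComplexConjugate

theorem Finset.sum_triple {ι M : Type*} [DecidableEq ι] [AddCommMonoid M] {a b c : ι}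
    (hab : a ≠ b) (hac : a ≠ c) (hbc : b ≠ c) (f : ι → M) :
    ∑ i ∈ {a, b, c}, f i = f a + f b + f c := by
  rw [Finset.sum_insert (by simp [hab, hac]), Finset.sum_pair hbc, add_assoc]

namespace Matrix

variable {m : Type*} [Fintype m]

theorem dotProduct_eq_sum_of_support_subset {R : Type*} [NonUnitalNonAssocSemiring R]
    {v : m → R} (w : m → R) {s : Finset m} (hv : ∀ i ∉ s, v i = 0) :
    v ⬝ᵥ w = ∑ i ∈ s, v i * w i :=
  (Finset.sum_subset (Finset.subset_univ s) fun i _ hi => by simp [hv i hi]).symm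

theorem dotProduct_mulVec_eq_sum_of_support_subset {R : Type*} [NonUnitalSemiring R]
    (A : Matrix m m R) {v w : m → R} {s : Finset m}
    (hv : ∀ i ∉ s, v i = 0) (hw : ∀ i ∉ s, w i = 0) :
    v ⬝ᵥ A *ᵥ w = ∑ i ∈ s, ∑ j ∈ s, v i * A i j * w j := by
  rw [dotProduct_eq_sum_of_support_subset _ hv]
  refine Finset.sum_congr rfl fun i _ => ?_
  simp only [mulVec, dotProduct, Finset.mul_sum, mul_assoc]
  exact (Finset.sum_subset (Finset.subset_univ s) fun j _ hj => by simp [hw j hj]).symm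

open scoped MatrixOrder in
theorem IsHermitian.re_dotProduct_mulVec_le_iSup_eigenvalues {𝕜 : Type*} [RCLike 𝕜]
    [DecidableEq m] {A : Matrix m m 𝕜} (hA : A.IsHermitian) (z : m → 𝕜) :
    RCLike.re (star z ⬝ᵥ A *ᵥ z) ≤ (⨆ i, hA.eigenvalues i) * RCLike.re (star z ⬝ᵥ z) := by
  have hle : A ≤ algebraMap ℝ (Matrix m m 𝕜) (⨆ i, hA.eigenvalues i) := by
    rw [le_algebraMap_iff_spectrum_le hA.isSelfAdjoint, hA.spectrum_real_eq_range_eigenvalues]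
    rintro _ ⟨i, rfl⟩
    exact le_ciSup (Set.finite_range _).bddAbove i
  have := (le_iff.mp hle).re_dotProduct_nonneg z
  rwa [sub_mulVec, dotProduct_sub, map_sub, sub_nonneg, Algebra.algebraMap_eq_smul_one,
    smul_mulVec, one_mulVec, dotProduct_smul, RCLike.smul_re] at this

end Matrix

namespace Complex

theorem ofReal_sqrt_two_sq : ((Real.sqrt 2 : ℝ) : ℂ) ^ 2 = 2 := by
  rw [← ofReal_pow]; norm_num

theorem ofReal_sqrt_normSq_add_normSq_sq (z w : ℂ) :
    ((Real.sqrt (normSq z + normSq w) : ℝ) : ℂ) ^ 2 = z * conj z + w * conj w := by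
  rw [mul_conj, mul_conj, ← ofReal_pow,
    Real.sq_sqrt (add_nonneg (normSq_nonneg z) (normSq_nonneg w))]
  push_cast; ring

theorem ofReal_sqrt_normSq_add_normSq_ne_zero {z w : ℂ} (h : ¬(z = 0 ∧ w = 0)) :
    ((Real.sqrt (normSq z + normSq w) : ℝ) : ℂ) ≠ 0 := by
  refine ofReal_ne_zero.mpr (Real.sqrt_ne_zero'.mpr ?_)
  rcases not_and_or.mp h with h | h
  · exact add_pos_of_pos_of_nonneg (normSq_pos.mpr h) (normSq_nonneg w)
  · exact add_pos_of_nonneg_of_pos (normSq_nonneg z) (normSq_pos.mpr h)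

end Complex

/-- The row vector `z*` of the statement; the unit vector `z` is its entrywise conjugate. -/
noncomputable def blockTestVector {n : ℕ} (j k : Fin n) (l w : ℂ) : Fin n × Fin 2 → ℂ :=
  let nrm : ℝ := Real.sqrt (normSq l + normSq w)
  fun p =>
    if p = (k, 0) then ((Real.sqrt 2)⁻¹ : ℝ)
    else if p = (j, 0) then conj l / (Real.sqrt 2 * nrm)
    else if p = (j, 1) then -w / (Real.sqrt 2 * nrm)
    else 0

section blockTestVector

variable {n : ℕ} {j k : Fin n} {l w : ℂ}

theorem sum_blockTestVector_support {M : Type*} [AddCommMonoid M] (hjk : j ≠ k)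
    (f : Fin n × Fin 2 → M) :
    ∑ p ∈ {(k, 0), (j, 0), (j, 1)}, f p = f (k, 0) + f (j, 0) + f (j, 1) :=
  Finset.sum_triple (by simp [hjk.symm]) (by simp [hjk.symm]) (by simp) f

theorem blockTestVector_eq_zero_of_notMem {p : Fin n × Fin 2}
    (hp : p ∉ ({(k, 0), (j, 0), (j, 1)} : Finset (Fin n × Fin 2))) :
    blockTestVector j k l w p = 0 := by
  simp only [Finset.mem_insert, Finset.mem_singleton, not_or] at hp
  simp [blockTestVector, hp.1, hp.2.1, hp.2.2]

theorem blockTestVector_apply_k_zero : blockTestVector j k l w (k, 0) = ((Real.sqrt 2)⁻¹ : ℝ) := by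
  simp [blockTestVector]

theorem blockTestVector_apply_j_zero (hjk : j ≠ k) :
    blockTestVector j k l w (j, 0) = conj l / (Real.sqrt 2 * Real.sqrt (normSq l + normSq w)) := by
  simp [blockTestVector, hjk]

theorem blockTestVector_apply_j_one (hjk : j ≠ k) :
    blockTestVector j k l w (j, 1) = -w / (Real.sqrt 2 * Real.sqrt (normSq l + normSq w)) := by
  simp [blockTestVector, hjk]

theorem blockTestVector_dotProduct_conj (hjk : j ≠ k) (hlw : ¬(l = 0 ∧ w = 0)) :
    blockTestVector j k l w ⬝ᵥ (fun q => conj (blockTestVector j k l w q)) = 1 := by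
  have hN0 := ofReal_sqrt_normSq_add_normSq_ne_zero hlw
  rw [dotProduct_eq_sum_of_support_subset _ fun p => blockTestVector_eq_zero_of_notMem,
    sum_blockTestVector_support hjk]
  simp only [blockTestVector_apply_k_zero, blockTestVector_apply_j_zero hjk,
    blockTestVector_apply_j_one hjk, map_div₀, map_mul, map_neg, map_inv₀, conj_ofReal, conj_conj,
    ofReal_inv]
  field_simp
  linear_combination -ofReal_sqrt_normSq_add_normSq_sq l w -
    ((Real.sqrt (normSq l + normSq w) : ℝ) : ℂ) ^ 2 * ofReal_sqrt_two_sq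

end blockTestVector

theorem block_quadratic_form_lower_bound {n : ℕ}
    (Q : Matrix (Fin n × Fin 2) (Fin n × Fin 2) ℂ) (hQ : Q.IsHermitian)
    (lam om : Fin n → Fin n → ℂ) (a : Fin n → ℝ)
    -- off-diagonal 2×2 blocks have the quaternion form [[λ, ω], [-ω̄, λ̄]]
    (hblock : ∀ j k : Fin n, j ≠ k →
      Q (j, 0) (k, 0) = lam j k ∧ Q (j, 0) (k, 1) = om j k ∧
      Q (j, 1) (k, 0) = -(starRingEnd ℂ) (om j k) ∧
      Q (j, 1) (k, 1) = (starRingEnd ℂ) (lam j k))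
    -- diagonal 2×2 blocks are a_{ll}·I₂
    (hdiag : ∀ l : Fin n, ∀ s s' : Fin 2,
      Q (l, s) (l, s') = if s = s' then (a l : ℂ) else 0)
    (j k : Fin n) (hjk : j ≠ k)
    (hne : ¬(lam j k = 0 ∧ om j k = 0)) :
    let nrm : ℝ := Real.sqrt (Complex.normSq (lam j k) + Complex.normSq (om j k))
    -- z* is the row vector described in the statement
    let zc : Fin n × Fin 2 → ℂ := fun p =>
      if p = (k, 0) then ((Real.sqrt 2)⁻¹ : ℝ)
      else if p = (j, 0) then (starRingEnd ℂ) (lam j k) / (Real.sqrt 2 * nrm)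
      else if p = (j, 1) then -(om j k) / (Real.sqrt 2 * nrm)
      else 0
    zc ⬝ᵥ Q.mulVec (fun q => (starRingEnd ℂ) (zc q))
        = ((nrm + (a j + a k) / 2 : ℝ) : ℂ) ∧
    nrm + (a j + a k) / 2 ≤ ⨆ i, hQ.eigenvalues i := by
  intro nrm zc
  have hzc : zc = blockTestVector j k (lam j k) (om j k) := rfl
  obtain ⟨hQjk, -, hQjk', -⟩ := hblock j k hjk
  have hQkj : Q (k, 0) (j, 0) = conj (lam j k) := by rw [← hQ.apply, hQjk]; rfl
  have hQkj' : Q (k, 0) (j, 1) = -om j k := by rw [← hQ.apply, hQjk']; simp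
  have hquad : zc ⬝ᵥ Q *ᵥ (fun q => conj (zc q)) = ((nrm + (a j + a k) / 2 : ℝ) : ℂ) := by
    have hN0 := ofReal_sqrt_normSq_add_normSq_ne_zero hne
    rw [hzc, dotProduct_mulVec_eq_sum_of_support_subset Q
      (fun p => blockTestVector_eq_zero_of_notMem)
      (fun p hp => by rw [blockTestVector_eq_zero_of_notMem hp, map_zero])]
    simp only [sum_blockTestVector_support hjk, blockTestVector_apply_k_zero,
      blockTestVector_apply_j_zero hjk, blockTestVector_apply_j_one hjk, hdiag, hQjk, hQjk',
      hQkj, hQkj', zero_ne_one, one_ne_zero, ↓reduceIte, mul_zero, zero_mul, add_zero, map_div₀,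
      map_mul, map_neg, map_inv₀, conj_ofReal, conj_conj, ofReal_inv, ofReal_add, ofReal_div,
      ofReal_ofNat]
    field_simp
    linear_combination
      (-2 * (2 * (nrm : ℂ) + a j)) * ofReal_sqrt_normSq_add_normSq_sq (lam j k) (om j k) -
        (nrm : ℂ) ^ 2 * (2 * nrm + a j + a k) * ofReal_sqrt_two_sq
  refine ⟨hquad, ?_⟩
  have hstar : star (fun q => conj (zc q)) = zc := funext fun q => conj_conj (zc q)
  simpa [hstar, hquad, hzc ▸ blockTestVector_dotProduct_conj hjk hne] using
    hQ.re_dotProduct_mulVec_le_iSup_eigenvalues fun q => conj (zc q)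
end

section
/- In any Γ(k,t)-graph of category 3 (i.e., every edge coincides with at least one other edge, and the graph is not of tree type with all multiplicities exactly 2), the number t of distinct vertices satisfies t ≤ (k+1)/2. -/
open Finset

lemma fin_sub_one_lt_aux {k : ℕ} [NeZero k] {j : Fin k} (h : j ≠ 0) : j - 1 < j := by
  rcases k with _ | m
  · exact absurd rfl (NeZero.ne 0)
  · rw [Fin.lt_iff_val_lt_val, Fin.coe_sub_one, if_neg h]
    have hv : j.val ≠ 0 := fun hv => h (Fin.ext hv)
    omega

theorem gamma3_graph_vertex_bound {k n : ℕ} [NeZero k] (l : Fin k → Fin n) :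
    -- t = number of distinct vertices of the Γ(k,t)-graph built from the cyclic
    -- sequence l, with edges e_j from l j to l (j+1) (indices mod k)
    let t : ℕ := (Finset.univ.image l).card
    let edge : Fin k → Sym2 (Fin n) := fun j => s(l j, l (j + 1))
    -- every edge coincides with at least one other edge
    (∀ j : Fin k, ∃ j' : Fin k, j' ≠ j ∧ edge j' = edge j) →
    -- the graph is not of tree type with all edge multiplicities exactly 2
    ¬((∀ j : Fin k, (Finset.univ.filter (fun j' => edge j' = edge j)).card = 2) ∧
        (Finset.univ.image edge).card = t - 1) →
    2 * t ≤ k + 1 := by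
  intro t edge hcov hnot
  by_contra hlt
  push_neg at hlt
  classical
  set E := (Finset.univ.image edge).card with hE
  -- Step 1: connectivity bound t ≤ E + 1
  have h0 : l 0 ∈ Finset.univ.image l := mem_image_of_mem l (mem_univ _)
  set m : Fin n → Fin k := fun v =>
    if h : (Finset.univ.filter (fun j => l j = v)).Nonempty then
      (Finset.univ.filter (fun j => l j = v)).min' h else 0 with hmdef
  have hmem : ∀ v ∈ (Finset.univ.image l).erase (l 0),
      l (m v) = v ∧ m v ≠ 0 ∧ ∀ i : Fin k, l i = v → m v ≤ i := by
    intro v hv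
    obtain ⟨j0, _, hj0⟩ := mem_image.mp (mem_of_mem_erase hv)
    have hne : (Finset.univ.filter (fun j => l j = v)).Nonempty :=
      ⟨j0, by simp [hj0]⟩
    have hmv : m v = (Finset.univ.filter (fun j => l j = v)).min' hne := by
      rw [hmdef]; simp [hne]
    have hmm := Finset.min'_mem _ hne
    rw [← hmv] at hmm
    have hlmv : l (m v) = v := (Finset.mem_filter.mp hmm).2
    refine ⟨hlmv, ?_, ?_⟩
    · intro h0'
      have : v ≠ l 0 := (Finset.ne_of_mem_erase hv)
      exact this (by rw [← hlmv, h0'])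
    · intro i hi
      rw [hmv]
      exact Finset.min'_le _ _ (by simp [hi])
  have hconn : t ≤ E + 1 := by
    have hcard : ((Finset.univ.image l).erase (l 0)).card ≤ E := by
      apply Finset.card_le_card_of_injOn (fun v => edge (m v - 1))
      · intro v _
        exact mem_image_of_mem edge (mem_univ _)
      · intro v hv w hw heq
        obtain ⟨hlv, hv0, hvmin⟩ := hmem v hv
        obtain ⟨hlw, hw0, hwmin⟩ := hmem w hw
        have hsv : m v - 1 + 1 = m v := sub_add_cancel (m v) 1
        have hsw : m w - 1 + 1 = m w := sub_add_cancel (m w) 1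
        simp only [edge, hsv, hsw, Sym2.eq_iff] at heq
        rcases heq with ⟨_, h2⟩ | ⟨h1, h2⟩
        · rw [← hlv, ← hlw, h2]
        · -- l (m v - 1) = l (m w) = w, l (m w - 1) = l (m v) = v
          exfalso
          have hv' : m v ≤ m w - 1 := hvmin _ (by rw [← h2]; exact hlv)
          have hw' : m w ≤ m v - 1 := hwmin _ (by rw [h1]; exact hlw)
          have h3 : m w - 1 < m w := fin_sub_one_lt_aux hw0
          have h4 : m v - 1 < m v := fin_sub_one_lt_aux hv0
          exact absurd (lt_of_le_of_lt hv' h3) (not_lt.mpr (le_of_lt (lt_of_le_of_lt hw' h4)))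
    rw [Finset.card_erase_of_mem h0] at hcard
    omega
  -- Step 2: k = sum of fiber sizes, each fiber ≥ 2
  have hsum : ∑ b ∈ Finset.univ.image edge,
      (Finset.univ.filter (fun j => edge j = b)).card = k := by
    rw [← Finset.card_eq_sum_card_image edge Finset.univ]
    simp
  have hfib : ∀ b ∈ Finset.univ.image edge,
      2 ≤ (Finset.univ.filter (fun j => edge j = b)).card := by
    intro b hb
    obtain ⟨j, _, hj⟩ := mem_image.mp hb
    obtain ⟨j', hj'ne, hj'⟩ := hcov j
    refine Finset.one_lt_card.mpr ⟨j', by simp [hj', hj], j, by simp [hj], hj'ne⟩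
  have h2E : 2 * E ≤ k := by
    calc 2 * E = ∑ _b ∈ Finset.univ.image edge, 2 := by
          rw [Finset.sum_const, smul_eq_mul, mul_comm]
      _ ≤ _ := Finset.sum_le_sum hfib
      _ = k := hsum
  -- equality analysis
  have ht : 2 * t = k + 2 := by omega
  have hEt : E = t - 1 := by omega
  have h2Ek : 2 * E = k := by omega
  apply hnot
  refine ⟨?_, hEt⟩
  have heqall : ∀ b ∈ Finset.univ.image edge,
      (Finset.univ.filter (fun j => edge j = b)).card = 2 := by
    have : ∑ _b ∈ Finset.univ.image edge, 2 =
        ∑ b ∈ Finset.univ.image edge, (Finset.univ.filter (fun j => edge j = b)).card := by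
      rw [hsum, Finset.sum_const, smul_eq_mul, mul_comm, h2Ek]
    intro b hb
    exact ((Finset.sum_eq_sum_iff_of_le hfib).mp this b hb).symm
  intro j
  exact heqall (edge j) (mem_image_of_mem edge (mem_univ _))
end
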